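/- Let p, q ≥ 0 with p + q > 0, let λ > 0, and let g : ℝ → ℝ be continuous with finite limits at +∞ and −∞. Suppose f₁ and f₂ are both continuous on ℝ with finite limits at +∞ and −∞, twice continuously differentiable on (−∞,0] and [0,∞) separately, satisfy λ² f(x) − f''(x) = g(x) for all x ≠ 0, and satisfy p·f'(0+) = q·f'(0−). Then f₁ = f₂. -/

import Mathlib

/-! The difference `u = f₁ - f₂` solves `u'' = l² u` away from `0`, has finite limits at `±∞` and
satisfies `p u'(0+) = q u'(0-)`. A nonzero limit at `+∞` would give `u''` a fixed sign there and
make `u` unbounded, so `u` vanishes at `±∞`. A positive maximum of `u` at `x₀` is then impossible: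
`u'' > 0` near `x₀` makes `u` strictly convex on either side of `x₀`, and on a side where the
one-sided derivative at `x₀` does not point downhill `u` would exceed its maximum. Such a side
exists at `x₀ ≠ 0` since `u'(x₀) = 0`, and at `x₀ = 0` because `p, q ≥ 0`, `p + q > 0` rule out
`u'(0+) < 0 < u'(0-)`. Hence `u ≤ 0`, and likewise `-u ≤ 0`. -/

open Filter Set Topology

def SolvesODEAt (c : ℝ) (u : ℝ → ℝ) (x : ℝ) : Prop :=
  ContDiffAt ℝ 2 u x ∧ iteratedDeriv 2 u x = c * u x

namespace SolvesODEAt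

variable {c x : ℝ} {u : ℝ → ℝ}

lemma differentiableAt (h : SolvesODEAt c u x) : DifferentiableAt ℝ u x :=
  h.1.differentiableAt (by norm_num)

lemma differentiableAt_deriv (h : SolvesODEAt c u x) : DifferentiableAt ℝ (deriv u) x :=
  (h.1.derivWithin (m := 1) (by norm_num)).differentiableAt one_ne_zero

lemma deriv_deriv (h : SolvesODEAt c u x) : deriv (deriv u) x = c * u x := by
  simpa only [iteratedDeriv_succ, iteratedDeriv_zero] using h.2

lemma neg (h : SolvesODEAt c u x) : SolvesODEAt c (-u) x :=
  ⟨h.1.neg, by rw [iteratedDeriv_neg, h.2, Pi.neg_apply, mul_neg]⟩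

lemma comp_neg (h : SolvesODEAt c u (-x)) : SolvesODEAt c (fun y ↦ u (-y)) x :=
  ⟨h.1.comp x contDiff_neg.contDiffAt, by rw [iteratedDeriv_comp_neg, h.2]; norm_num⟩

end SolvesODEAt

lemma solvesODEAt_sub {c x : ℝ} {f₁ f₂ : ℝ → ℝ} (h₁ : ContDiffAt ℝ 2 f₁ x)
    (h₂ : ContDiffAt ℝ 2 f₂ x)
    (h : c * f₁ x - deriv (deriv f₁) x = c * f₂ x - deriv (deriv f₂) x) :
    SolvesODEAt c (f₁ - f₂) x := by
  refine ⟨h₁.sub h₂, ?_⟩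
  simp only [iteratedDeriv_sub h₁ h₂, iteratedDeriv_succ, iteratedDeriv_zero, Pi.sub_apply]
  linarith

lemma contDiffAt_of_contDiffOn_Ici_Iic {n : WithTop ℕ∞} {f : ℝ → ℝ} {a x : ℝ}
    (h₁ : ContDiffOn ℝ n f (Ici a)) (h₂ : ContDiffOn ℝ n f (Iic a)) (hx : x ≠ a) :
    ContDiffAt ℝ n f x := by
  rcases hx.lt_or_gt with hx | hx
  · exact h₂.contDiffAt (Iic_mem_nhds hx)
  · exact h₁.contDiffAt (Ici_mem_nhds hx)

lemma tendsto_atTop_of_eventually_le_deriv {c : ℝ} {u : ℝ → ℝ} (hc : 0 < c)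
    (hu : ∀ᶠ x in atTop, DifferentiableAt ℝ u x ∧ c ≤ deriv u x) :
    Tendsto u atTop atTop := by
  obtain ⟨a, ha⟩ := hu.exists_forall_of_atTop
  have hmvt : ∀ x ∈ Ici a, c * (x - a) ≤ u x - u a := fun x hx ↦
    (convex_Ici a).mul_sub_le_image_sub_of_le_deriv
      (fun y hy ↦ (ha y hy).1.continuousAt.continuousWithinAt)
      (fun y hy ↦ (ha y (interior_subset hy)).1.differentiableWithinAt)
      (fun y hy ↦ (ha y (interior_subset hy)).2) a self_mem_Ici x hx hx
  refine tendsto_atTop_mono' atTop ?_ (tendsto_atTop_add_const_left _ (u a)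
    ((tendsto_atTop_add_const_right _ (-a) tendsto_id).const_mul_atTop hc))
  filter_upwards [eventually_ge_atTop a] with x hx
  simp only [id]
  linarith [hmvt x hx]

lemma nonpos_of_tendsto_of_solvesODEAt {c L : ℝ} {u : ℝ → ℝ} (hc : 0 < c)
    (hu : Tendsto u atTop (𝓝 L)) (hsol : ∀ᶠ x in atTop, SolvesODEAt c u x) : L ≤ 0 := by
  by_contra! hL
  have hu'' : ∀ᶠ x in atTop,
      DifferentiableAt ℝ (deriv u) x ∧ c * (L / 2) ≤ deriv (deriv u) x := by
    filter_upwards [hsol, hu.eventually (eventually_ge_nhds (half_lt_self hL))] with x hx hxL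
    exact ⟨hx.differentiableAt_deriv, hx.deriv_deriv ▸ by gcongr⟩
  have hu' : ∀ᶠ x in atTop, DifferentiableAt ℝ u x ∧ 1 ≤ deriv u x := by
    filter_upwards [hsol,
      (tendsto_atTop_of_eventually_le_deriv (by positivity) hu'').eventually_ge_atTop 1]
      with x hx hx'
    exact ⟨hx.differentiableAt, hx'⟩
  exact not_tendsto_nhds_of_tendsto_atTop (tendsto_atTop_of_eventually_le_deriv one_pos hu') _ hu

lemma eq_zero_of_tendsto_of_solvesODEAt {c L : ℝ} {u : ℝ → ℝ} (hc : 0 < c)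
    (hu : Tendsto u atTop (𝓝 L)) (hsol : ∀ᶠ x in atTop, SolvesODEAt c u x) : L = 0 :=
  le_antisymm (nonpos_of_tendsto_of_solvesODEAt hc hu hsol) <| neg_nonpos.1 <|
    nonpos_of_tendsto_of_solvesODEAt hc hu.neg (hsol.mono fun _ h ↦ h.neg)

lemma strictConvexOn_of_solvesODEAt {c : ℝ} {u : ℝ → ℝ} {D : Set ℝ} (hc : 0 < c)
    (hD : Convex ℝ D) (hu : ContinuousOn u D) (hsol : ∀ x ∈ interior D, SolvesODEAt c u x)
    (hpos : ∀ x ∈ interior D, 0 < u x) : StrictConvexOn ℝ D u :=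
  strictConvexOn_of_deriv2_pos hD hu fun x hx ↦ by
    rw [← iteratedDeriv_eq_iterate, (hsol x hx).2]
    exact mul_pos hc (hpos x hx)

namespace StrictConvexOn

variable {S : Set ℝ} {f : ℝ → ℝ} {a b d : ℝ}

lemma lt_of_hasDerivWithinAt_Ioi_nonneg (hf : StrictConvexOn ℝ S f) (ha : a ∈ S) (hb : b ∈ S)
    (hab : a < b) (hd : HasDerivWithinAt f d (Ioi a) a) (hd0 : 0 ≤ d) : f a < f b := by
  have := hd0.trans_lt (hf.lt_slope_of_hasDerivWithinAt_Ioi ha hb hab hd)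
  rw [slope_def_field, div_pos_iff_of_pos_right (sub_pos.2 hab)] at this
  linarith

lemma lt_of_hasDerivWithinAt_Iio_nonpos (hf : StrictConvexOn ℝ S f) (ha : a ∈ S) (hb : b ∈ S)
    (hab : a < b) (hd : HasDerivWithinAt f d (Iio b) b) (hd0 : d ≤ 0) : f b < f a := by
  have := (hf.slope_lt_of_hasDerivWithinAt_Iio ha hb hab hd).trans_le hd0
  rw [slope_def_field, div_neg_iff] at this
  rcases this with ⟨-, h⟩ | ⟨h, -⟩ <;> linarith

end StrictConvexOn

lemma nonneg_or_nonpos_of_mul_eq_mul {p q a b : ℝ} (hp : 0 ≤ p) (hq : 0 ≤ q) (hpq : 0 < p + q)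
    (h : p * a = q * b) : 0 ≤ a ∨ b ≤ 0 := by
  by_contra! hab
  nlinarith [mul_pos (mul_pos hpq (neg_pos.2 hab.1)) hab.2, mul_nonneg hp (sq_nonneg a),
    mul_nonneg hq (sq_nonneg b)]

lemma nonpos_of_solvesODEAt {c dR dL : ℝ} {u : ℝ → ℝ} (hc : 0 < c) (hu : Continuous u)
    (hsol : ∀ x ≠ 0, SolvesODEAt c u x)
    (hright : HasDerivWithinAt u dR (Ioi 0) 0) (hleft : HasDerivWithinAt u dL (Iio 0) 0)
    (hinward : 0 ≤ dR ∨ dL ≤ 0)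
    (htop : Tendsto u atTop (𝓝 0)) (hbot : Tendsto u atBot (𝓝 0)) (x : ℝ) : u x ≤ 0 := by
  by_contra! hx
  obtain ⟨x₀, hmax⟩ : ∃ x₀, ∀ y, u y ≤ u x₀ := hu.exists_forall_ge' x <| by
    rw [cocompact_eq_atBot_atTop]
    exact (tendsto_sup.2 ⟨hbot, htop⟩).eventually (eventually_le_nhds hx)
  have hpos : 0 < u x₀ := hx.trans_le (hmax x)
  obtain ⟨a, b, ⟨hax₀, hx₀b⟩, hab⟩ :=
    mem_nhds_iff_exists_Ioo_subset.1 (hu.continuousAt.eventually (eventually_gt_nhds hpos))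
  have hcrit (hx₀ : x₀ ≠ 0) : HasDerivAt u 0 x₀ := by
    simpa [IsLocalMax.deriv_eq_zero (.of_forall hmax)] using
      (hsol x₀ hx₀).differentiableAt.hasDerivAt
  have hside : (0 ≤ x₀ ∧ ∃ d, 0 ≤ d ∧ HasDerivWithinAt u d (Ioi x₀) x₀) ∨
      (x₀ ≤ 0 ∧ ∃ d, d ≤ 0 ∧ HasDerivWithinAt u d (Iio x₀) x₀) := by
    rcases lt_trichotomy x₀ 0 with hneg | rfl | hx₀pos
    · exact .inr ⟨hneg.le, 0, le_rfl, (hcrit hneg.ne).hasDerivWithinAt⟩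
    · exact hinward.imp (fun h ↦ ⟨le_rfl, dR, h, hright⟩)
        (fun h ↦ ⟨le_rfl, dL, h, hleft⟩)
    · exact .inl ⟨hx₀pos.le, 0, le_rfl, (hcrit hx₀pos.ne').hasDerivWithinAt⟩
  rcases hside with ⟨h0, d, hd, hder⟩ | ⟨h0, d, hd, hder⟩
  · have hconv : StrictConvexOn ℝ (Icc x₀ b) u := by
      refine strictConvexOn_of_solvesODEAt hc (convex_Icc _ _) hu.continuousOn ?_ ?_ <;>
        rw [interior_Icc] <;> intro y hy
      exacts [hsol y (h0.trans_lt hy.1).ne', hab ⟨hax₀.trans hy.1, hy.2⟩]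
    exact (hconv.lt_of_hasDerivWithinAt_Ioi_nonneg (left_mem_Icc.2 hx₀b.le)
      (right_mem_Icc.2 hx₀b.le) hx₀b hder hd).not_ge (hmax b)
  · have hconv : StrictConvexOn ℝ (Icc a x₀) u := by
      refine strictConvexOn_of_solvesODEAt hc (convex_Icc _ _) hu.continuousOn ?_ ?_ <;>
        rw [interior_Icc] <;> intro y hy
      exacts [hsol y (hy.2.trans_le h0).ne, hab ⟨hy.1, hy.2.trans hx₀b⟩]
    exact (hconv.lt_of_hasDerivWithinAt_Iio_nonpos (left_mem_Icc.2 hax₀.le)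
      (right_mem_Icc.2 hax₀.le) hax₀ hder hd).not_ge (hmax a)

lemma eq_zero_of_solvesODEAt {c p q dR dL L M : ℝ} {u : ℝ → ℝ} (hc : 0 < c)
    (hp : 0 ≤ p) (hq : 0 ≤ q) (hpq : 0 < p + q) (hu : Continuous u)
    (hsol : ∀ x ≠ 0, SolvesODEAt c u x)
    (hright : HasDerivWithinAt u dR (Ioi 0) 0) (hleft : HasDerivWithinAt u dL (Iio 0) 0)
    (hbc : p * dR = q * dL) (htop : Tendsto u atTop (𝓝 L)) (hbot : Tendsto u atBot (𝓝 M)) :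
    u = 0 := by
  obtain rfl : L = 0 := eq_zero_of_tendsto_of_solvesODEAt hc htop <|
    (eventually_gt_atTop 0).mono fun x hx ↦ hsol x hx.ne'
  obtain rfl : M = 0 := eq_zero_of_tendsto_of_solvesODEAt hc (hbot.comp tendsto_neg_atTop_atBot) <|
    (eventually_gt_atTop 0).mono fun x hx ↦ (hsol (-x) (neg_ne_zero.2 hx.ne')).comp_neg
  funext x
  refine le_antisymm (nonpos_of_solvesODEAt hc hu hsol hright hleft
    (nonneg_or_nonpos_of_mul_eq_mul hp hq hpq hbc) htop hbot x) (neg_nonpos.1 ?_)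
  refine nonpos_of_solvesODEAt hc hu.neg (fun x hx ↦ (hsol x hx).neg) hright.neg hleft.neg
    (nonneg_or_nonpos_of_mul_eq_mul hp hq hpq (by linear_combination -hbc))
    (neg_zero (G := ℝ) ▸ htop.neg) (neg_zero (G := ℝ) ▸ hbot.neg) x

theorem stmt13 (p q : ℝ) (hp : 0 ≤ p) (hq : 0 ≤ q) (hpq : 0 < p + q)
    (l : ℝ) (hl : 0 < l) (g : ℝ → ℝ)
    (f₁ f₂ : ℝ → ℝ)
    (h₁c : Continuous f₁) (h₂c : Continuous f₂)
    (h₁t : ∃ L : ℝ, Tendsto f₁ atTop (nhds L)) (h₁b : ∃ L : ℝ, Tendsto f₁ atBot (nhds L))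
    (h₂t : ∃ L : ℝ, Tendsto f₂ atTop (nhds L)) (h₂b : ∃ L : ℝ, Tendsto f₂ atBot (nhds L))
    (h₁d : ContDiffOn ℝ 2 f₁ (Set.Ici 0)) (h₁d' : ContDiffOn ℝ 2 f₁ (Set.Iic 0))
    (h₂d : ContDiffOn ℝ 2 f₂ (Set.Ici 0)) (h₂d' : ContDiffOn ℝ 2 f₂ (Set.Iic 0))
    (h₁eq : ∀ x : ℝ, x ≠ 0 → l^2 * f₁ x - deriv (deriv f₁) x = g x)
    (h₂eq : ∀ x : ℝ, x ≠ 0 → l^2 * f₂ x - deriv (deriv f₂) x = g x)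
    (h₁bc : p * derivWithin f₁ (Set.Ici 0) 0 = q * derivWithin f₁ (Set.Iic 0) 0)
    (h₂bc : p * derivWithin f₂ (Set.Ici 0) 0 = q * derivWithin f₂ (Set.Iic 0) 0) :
    f₁ = f₂ := by
  obtain ⟨L₁, hL₁⟩ := h₁t
  obtain ⟨L₂, hL₂⟩ := h₂t
  obtain ⟨M₁, hM₁⟩ := h₁b
  obtain ⟨M₂, hM₂⟩ := h₂b
  have hright {f : ℝ → ℝ} (hf : ContDiffOn ℝ 2 f (Ici 0)) :
      HasDerivWithinAt f (derivWithin f (Ici 0) 0) (Ioi 0) 0 :=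
    ((hf.differentiableOn two_ne_zero) 0 self_mem_Ici).hasDerivWithinAt.mono Ioi_subset_Ici_self
  have hleft {f : ℝ → ℝ} (hf : ContDiffOn ℝ 2 f (Iic 0)) :
      HasDerivWithinAt f (derivWithin f (Iic 0) 0) (Iio 0) 0 :=
    ((hf.differentiableOn two_ne_zero) 0 self_mem_Iic).hasDerivWithinAt.mono Iio_subset_Iic_self
  have hsol (x : ℝ) (hx : x ≠ 0) : SolvesODEAt (l ^ 2) (f₁ - f₂) x :=
    solvesODEAt_sub (contDiffAt_of_contDiffOn_Ici_Iic h₁d h₁d' hx)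
      (contDiffAt_of_contDiffOn_Ici_Iic h₂d h₂d' hx) (by rw [h₁eq x hx, h₂eq x hx])
  exact sub_eq_zero.1 <| eq_zero_of_solvesODEAt (by positivity) hp hq hpq (h₁c.sub h₂c) hsol
    ((hright h₁d).sub (hright h₂d)) ((hleft h₁d').sub (hleft h₂d'))
    (by linear_combination h₁bc - h₂bc) (hL₁.sub hL₂) (hM₁.sub hM₂)
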